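/- arXiv:0708.0948 — 4 statements merged into one kernel-verified Lean document; each statement's English description precedes it below -/
import Mathlib

section
/- Let ρ_A and ρ_B be convex risk measures on X with (ρ_A □ ρ_B)(0) > −∞, and let ρ_{A,B} = ρ_A □ ρ_B be their inf-convolution. Then for every linear functional q : X → ℝ, the minimal penalty functions satisfy α_{ρ_{A,B}}(q) = α_{ρ_A}(q) + α_{ρ_B}(q), as an equality in the extended reals ℝ ∪ {+∞} (both summands are bounded below by −ρ_A(0) and −ρ_B(0) respectively, so the sum is well defined). -/
/-! The identity `α_{ρ_A □ ρ_B} = α_{ρ_A} + α_{ρ_B}` comes from substituting `Φ = Ψ - H`: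
by linearity `q(-Ψ) = q(-Φ) + q(-H)`, so `sup_Ψ (q(-Ψ) - inf_H (ρ_A(Ψ - H) + ρ_B(H)))` is the
supremum over all pairs `(Φ, H)` of `(q(-Φ) - ρ_A(Φ)) + (q(-H) - ρ_B(H))`. Monotonicity and cash
invariance give `ρ_A(Ψ - H) ≥ ρ_A(-H) - ‖Ψ‖`, so the infimum is a genuine (finite) infimum. -/

open BoundedContinuousFunction

/-- A (monetary) convex risk measure on the space `Ω →ᵇ ℝ` of bounded functions on `Ω`. -/
def IsConvexRiskMeasure {Ω : Type*} [TopologicalSpace Ω] (ρ : (Ω →ᵇ ℝ) → ℝ) : Prop :=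
  (∀ (Φ Ψ : Ω →ᵇ ℝ) (l : ℝ), 0 ≤ l → l ≤ 1 →
      ρ (l • Φ + (1 - l) • Ψ) ≤ l * ρ Φ + (1 - l) * ρ Ψ) ∧
  (∀ Φ Ψ : Ω →ᵇ ℝ, (∀ ω, Φ ω ≤ Ψ ω) → ρ Ψ ≤ ρ Φ) ∧
  (∀ (Φ : Ω →ᵇ ℝ) (m : ℝ), ρ (Φ + BoundedContinuousFunction.const Ω m) = ρ Φ - m)

/-- The minimal penalty function of `ρ` at a linear functional `q`, with values in
`ℝ ∪ {+∞}` (formalized inside the extended reals `EReal`):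
`α_ρ(q) = sup_Ψ (q(-Ψ) - ρ(Ψ))`. -/
noncomputable def penalty {Ω : Type*} [TopologicalSpace Ω]
    (ρ : (Ω →ᵇ ℝ) → ℝ) (q : (Ω →ᵇ ℝ) →ₗ[ℝ] ℝ) : EReal :=
  ⨆ Ψ : Ω →ᵇ ℝ, ((q (-Ψ) - ρ Ψ : ℝ) : EReal)

section InfConvolution

variable {Ω : Type*} [TopologicalSpace Ω]

noncomputable def infConv (ρA ρB : (Ω →ᵇ ℝ) → ℝ) (Ψ : Ω →ᵇ ℝ) : ℝ :=
  ⨅ H : Ω →ᵇ ℝ, (ρA (Ψ - H) + ρB H)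

lemma IsConvexRiskMeasure.sub_norm_le {ρ : (Ω →ᵇ ℝ) → ℝ} (hρ : IsConvexRiskMeasure ρ)
    (Φ Ψ : Ω →ᵇ ℝ) : ρ Φ - ‖Ψ‖ ≤ ρ (Ψ + Φ) := by
  obtain ⟨-, hmono, hcash⟩ := hρ
  rw [← hcash]
  refine hmono _ _ fun ω => ?_
  simp only [coe_add, Pi.add_apply, const_apply]
  linarith [(abs_le.1 (Ψ.norm_coe_le_norm ω)).2]

lemma bddBelow_range_infConv {ρA ρB : (Ω →ᵇ ℝ) → ℝ} (hA : IsConvexRiskMeasure ρA)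
    {c : ℝ} (hc : ∀ H : Ω →ᵇ ℝ, c ≤ ρA (-H) + ρB H) (Ψ : Ω →ᵇ ℝ) :
    BddBelow (Set.range fun H : Ω →ᵇ ℝ => ρA (Ψ - H) + ρB H) := by
  refine ⟨c - ‖Ψ‖, ?_⟩
  rintro _ ⟨H, rfl⟩
  have hΨ := hA.sub_norm_le (-H) Ψ
  rw [← sub_eq_add_neg] at hΨ
  linarith [hc H]

lemma coe_le_penalty (ρ : (Ω →ᵇ ℝ) → ℝ) (q : (Ω →ᵇ ℝ) →ₗ[ℝ] ℝ) (Ψ : Ω →ᵇ ℝ) :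
    ((q (-Ψ) - ρ Ψ : ℝ) : EReal) ≤ penalty ρ q :=
  le_iSup (fun Φ => ((q (-Φ) - ρ Φ : ℝ) : EReal)) Ψ

lemma penalty_infConv_le (ρA ρB : (Ω →ᵇ ℝ) → ℝ) (q : (Ω →ᵇ ℝ) →ₗ[ℝ] ℝ) :
    penalty (infConv ρA ρB) q ≤ penalty ρA q + penalty ρB q := by
  refine iSup_le fun Ψ => EReal.ge_of_forall_gt_iff_ge.1 fun z hz => ?_
  have hz : infConv ρA ρB Ψ < q (-Ψ) - z := by
    have : z < q (-Ψ) - infConv ρA ρB Ψ := by exact_mod_cast hz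
    linarith
  obtain ⟨H, hH⟩ := exists_lt_of_ciInf_lt hz
  have hsplit : q (-Ψ) = q (-(Ψ - H)) + q (-H) := by
    rw [← map_add, ← neg_add, sub_add_cancel]
  calc (z : EReal)
      ≤ ((q (-(Ψ - H)) - ρA (Ψ - H) : ℝ) : EReal) + ((q (-H) - ρB H : ℝ) : EReal) := by
        rw [← EReal.coe_add, EReal.coe_le_coe_iff]
        linarith
    _ ≤ penalty ρA q + penalty ρB q :=
        add_le_add (coe_le_penalty ρA q _) (coe_le_penalty ρB q H)

lemma penalty_add_le_penalty_infConv {ρA ρB : (Ω →ᵇ ℝ) → ℝ}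
    (hbdd : ∀ Ψ, BddBelow (Set.range fun H : Ω →ᵇ ℝ => ρA (Ψ - H) + ρB H))
    (q : (Ω →ᵇ ℝ) →ₗ[ℝ] ℝ) :
    penalty ρA q + penalty ρB q ≤ penalty (infConv ρA ρB) q := by
  refine EReal.add_le_of_forall_lt fun a ha b hb => ?_
  obtain ⟨Φ, hΦ⟩ := lt_iSup_iff.1 ha
  obtain ⟨H, hH⟩ := lt_iSup_iff.1 hb
  have hinf : infConv ρA ρB (Φ + H) ≤ ρA Φ + ρB H := by
    simpa [infConv] using ciInf_le (hbdd (Φ + H)) H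
  calc a + b
      ≤ ((q (-Φ) - ρA Φ : ℝ) : EReal) + ((q (-H) - ρB H : ℝ) : EReal) :=
        add_le_add hΦ.le hH.le
    _ ≤ ((q (-(Φ + H)) - infConv ρA ρB (Φ + H) : ℝ) : EReal) := by
        rw [← EReal.coe_add, EReal.coe_le_coe_iff, neg_add, map_add]
        linarith
    _ ≤ penalty (infConv ρA ρB) q := coe_le_penalty _ q _

end InfConvolution

theorem stmt8_general {Ω : Type*} [TopologicalSpace Ω]
    (ρA ρB : (Ω →ᵇ ℝ) → ℝ)
    (hA : IsConvexRiskMeasure ρA)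
    (c : ℝ) (hc : ∀ H : Ω →ᵇ ℝ, c ≤ ρA (-H) + ρB H)
    (q : (Ω →ᵇ ℝ) →ₗ[ℝ] ℝ) :
    penalty (fun Ψ : Ω →ᵇ ℝ => ⨅ H : Ω →ᵇ ℝ, (ρA (Ψ - H) + ρB H)) q
      = penalty ρA q + penalty ρB q :=
  le_antisymm (penalty_infConv_le ρA ρB q)
    (penalty_add_le_penalty_infConv (bddBelow_range_infConv hA hc) q)

/-- The minimal penalty function of the inf-convolution of two convex risk measures
is the sum of the penalty functions. -/
theorem stmt8 {Ω : Type*} [TopologicalSpace Ω] [DiscreteTopology Ω] [Nonempty Ω]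
    (ρA ρB : (Ω →ᵇ ℝ) → ℝ)
    (hA : IsConvexRiskMeasure ρA) (hB : IsConvexRiskMeasure ρB)
    (c : ℝ) (hc : ∀ H : Ω →ᵇ ℝ, c ≤ ρA (-H) + ρB H)
    (q : (Ω →ᵇ ℝ) →ₗ[ℝ] ℝ) :
    penalty (fun Ψ : Ω →ᵇ ℝ => ⨅ H : Ω →ᵇ ℝ, (ρA (Ψ - H) + ρB H)) q
      = penalty ρA q + penalty ρB q :=
  stmt8_general ρA ρB hA c hc q
end

section
/- Let ρ_A and ρ_B be convex risk measures on X with (ρ_A □ ρ_B)(0) > −∞. If ρ_A is continuous from below (for every sequence (Ψ_n) in X that is pointwise non-decreasing with pointwise limit Ψ ∈ X, ρ_A(Ψ_n) → ρ_A(Ψ)), then the inf-convolution ρ_A □ ρ_B is continuous from below: for every pointwise non-decreasing sequence (Ψ_n) in X with pointwise limit Ψ ∈ X, inf_n (ρ_A □ ρ_B)(Ψ_n) = (ρ_A □ ρ_B)(Ψ). -/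
open BoundedContinuousFunction Filter

/-- Continuity from below: for every pointwise non-decreasing sequence converging
pointwise, the values of `ρ` converge. -/
def ContinuousFromBelow {Ω : Type*} [TopologicalSpace Ω] (ρ : (Ω →ᵇ ℝ) → ℝ) : Prop :=
  ∀ (Ψn : ℕ → (Ω →ᵇ ℝ)) (Ψ : Ω →ᵇ ℝ),
    (∀ n ω, Ψn n ω ≤ Ψn (n + 1) ω) →
    (∀ ω, Tendsto (fun n => Ψn n ω) atTop (nhds (Ψ ω))) →
    Tendsto (fun n => ρ (Ψn n)) atTop (nhds (ρ Ψ))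

theorem ciInf_ciInf_eq_of_tendsto {ι κ : Type*} [Nonempty κ] {l : Filter ι} [l.NeBot]
    {g : ι → κ → ℝ} {g' : κ → ℝ} (hbdd : BddBelow (Set.range g'))
    (hle : ∀ i k, g' k ≤ g i k) (htend : ∀ k, Tendsto (fun i => g i k) l (nhds (g' k))) :
    ⨅ i, ⨅ k, g i k = ⨅ k, g' k := by
  have : Nonempty ι := l.nonempty_of_neBot
  have hbdd_i : ∀ i, BddBelow (Set.range (g i)) := fun i => by
    obtain ⟨b, hb⟩ := hbdd
    exact ⟨b, by rintro _ ⟨k, rfl⟩; exact (hb ⟨k, rfl⟩).trans (hle i k)⟩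
  have hinf_le : ∀ i, ⨅ k, g' k ≤ ⨅ k, g i k := fun i => ciInf_mono hbdd (hle i)
  have hbdd_inf : BddBelow (Set.range fun i => ⨅ k, g i k) :=
    ⟨⨅ k, g' k, by rintro _ ⟨i, rfl⟩; exact hinf_le i⟩
  refine le_antisymm (le_ciInf fun k => ge_of_tendsto' (htend k) fun i => ?_) (le_ciInf hinf_le)
  exact (ciInf_le hbdd_inf i).trans (ciInf_le (hbdd_i i) k)

namespace IsConvexRiskMeasure

variable {Ω : Type*} [TopologicalSpace Ω] {ρ : (Ω →ᵇ ℝ) → ℝ}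

theorem anti (hρ : IsConvexRiskMeasure ρ) {Φ Ψ : Ω →ᵇ ℝ} (h : ∀ ω, Φ ω ≤ Ψ ω) : ρ Ψ ≤ ρ Φ :=
  hρ.2.1 Φ Ψ h

theorem sub_norm_le_s9 (hρ : IsConvexRiskMeasure ρ) (Φ G : Ω →ᵇ ℝ) : ρ G - ‖Φ‖ ≤ ρ (Φ + G) := by
  rw [← hρ.2.2]
  refine hρ.anti fun ω => ?_
  have := (le_abs_self (Φ ω)).trans (Φ.norm_coe_le_norm ω)
  simp only [coe_add, Pi.add_apply, const_apply]
  linarith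

/-- Finiteness of `(ρ □ ρ')(0)` propagates to every `Ψ`. -/
theorem bddBelow_infConvolution (hρ : IsConvexRiskMeasure ρ) {ρ' : (Ω →ᵇ ℝ) → ℝ} {c : ℝ}
    (hc : ∀ H : Ω →ᵇ ℝ, c ≤ ρ (-H) + ρ' H) (Ψ : Ω →ᵇ ℝ) :
    BddBelow (Set.range fun H => ρ (Ψ - H) + ρ' H) := by
  refine ⟨c - ‖Ψ‖, ?_⟩
  rintro _ ⟨H, rfl⟩
  have := hρ.sub_norm_le_s9 Ψ (-H)
  rw [← sub_eq_add_neg] at this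
  linarith [hc H]

end IsConvexRiskMeasure

theorem ContinuousFromBelow.tendsto_sub {Ω : Type*} [TopologicalSpace Ω]
    {ρ : (Ω →ᵇ ℝ) → ℝ} (hρ : ContinuousFromBelow ρ) {Ψn : ℕ → (Ω →ᵇ ℝ)} {Ψ : Ω →ᵇ ℝ}
    (hmono : ∀ n ω, Ψn n ω ≤ Ψn (n + 1) ω)
    (htend : ∀ ω, Tendsto (fun n => Ψn n ω) atTop (nhds (Ψ ω)))
    (H : Ω →ᵇ ℝ) : Tendsto (fun n => ρ (Ψn n - H)) atTop (nhds (ρ (Ψ - H))) :=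
  hρ (fun n => Ψn n - H) (Ψ - H) (fun n ω => by simpa using hmono n ω)
    (fun ω => by simpa using (htend ω).sub_const (H ω))

theorem stmt9_general {Ω : Type*} [TopologicalSpace Ω]
    (ρA ρB : (Ω →ᵇ ℝ) → ℝ)
    (hA : IsConvexRiskMeasure ρA)
    (c : ℝ) (hc : ∀ H : Ω →ᵇ ℝ, c ≤ ρA (-H) + ρB H)
    (hcb : ContinuousFromBelow ρA) :
    ∀ (Ψn : ℕ → (Ω →ᵇ ℝ)) (Ψ : Ω →ᵇ ℝ),
      (∀ n ω, Ψn n ω ≤ Ψn (n + 1) ω) →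
      (∀ ω, Tendsto (fun n => Ψn n ω) atTop (nhds (Ψ ω))) →
      (⨅ n : ℕ, ⨅ H : Ω →ᵇ ℝ, (ρA (Ψn n - H) + ρB H))
        = ⨅ H : Ω →ᵇ ℝ, (ρA (Ψ - H) + ρB H) := by
  intro Ψn Ψ hmono htend
  have hle_lim : ∀ n ω, Ψn n ω ≤ Ψ ω := fun n ω =>
    (monotone_nat_of_le_succ fun k => hmono k ω).ge_of_tendsto (htend ω) n
  refine ciInf_ciInf_eq_of_tendsto (hA.bddBelow_infConvolution hc Ψ) (fun n H => ?_)
    (fun H => (hcb.tendsto_sub hmono htend H).add_const _)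
  have := hA.anti (Φ := Ψn n - H) (Ψ := Ψ - H) fun ω => by simpa using hle_lim n ω
  linarith

/-- If `ρ_A` is continuous from below, then `ρ_A □ ρ_B` is continuous from below:
for every pointwise non-decreasing sequence `Ψ_n → Ψ`,
`inf_n (ρ_A □ ρ_B)(Ψ_n) = (ρ_A □ ρ_B)(Ψ)`. -/
theorem stmt9 {Ω : Type*} [TopologicalSpace Ω] [DiscreteTopology Ω] [Nonempty Ω]
    (ρA ρB : (Ω →ᵇ ℝ) → ℝ)
    (hA : IsConvexRiskMeasure ρA) (hB : IsConvexRiskMeasure ρB)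
    (c : ℝ) (hc : ∀ H : Ω →ᵇ ℝ, c ≤ ρA (-H) + ρB H)
    (hcb : ContinuousFromBelow ρA) :
    ∀ (Ψn : ℕ → (Ω →ᵇ ℝ)) (Ψ : Ω →ᵇ ℝ),
      (∀ n ω, Ψn n ω ≤ Ψn (n + 1) ω) →
      (∀ ω, Tendsto (fun n => Ψn n ω) atTop (nhds (Ψ ω))) →
      (⨅ n : ℕ, ⨅ H : Ω →ᵇ ℝ, (ρA (Ψn n - H) + ρB H))
        = ⨅ H : Ω →ᵇ ℝ, (ρA (Ψ - H) + ρB H) :=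
  stmt9_general ρA ρB hA c hc hcb
end

section
/- (Sandwich theorem.) Let ρ_A and ρ_B be convex risk measures on X (a Banach space under the supremum norm) and let c ∈ ℝ be such that ρ_A(H) + ρ_B(−H) ≥ c for all H ∈ X (i.e. (ρ_A □ ρ_B)(0) ≥ c). Then there exist a continuous linear functional q on X that is positive (Ψ ≥ 0 pointwise implies q(Ψ) ≥ 0) and normalized (q(1) = 1), and a real number r, such that for every Ψ ∈ X: ρ_A(Ψ) ≥ q(−Ψ) + r and q(−Ψ) + r ≥ −ρ_B(−Ψ) + c. -/
/-!
Since `ρ_A` is convex and 1-Lipschitz, its strict epigraph is an open convex subset of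
`X × ℝ`; by the hypothesis on `c` it is disjoint from the hypograph of the concave function
`Ψ ↦ c - ρ_B(-Ψ)`. A separating hyperplane from Hahn–Banach is not vertical, so it is the graph
of a continuous affine function `Ψ ↦ φ Ψ + r` lying between the two, and `q = -φ`. Monotonicity
and cash invariance of `ρ_A` force `φ` to be nonpositive on nonnegative functions and
`φ 1 = -1`, because a linear functional bounded above along a ray must be nonpositive on it.
-/

open BoundedContinuousFunction

theorem nonpos_of_forall_nonneg_mul_le {a C : ℝ} (h : ∀ s, 0 ≤ s → s * a ≤ C) : a ≤ 0 := by
  by_contra! ha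
  have := h ((|C| + 1) / a) (by positivity)
  rw [div_mul_cancel₀ _ ha.ne'] at this
  linarith [le_abs_self C]

theorem eq_zero_of_forall_mul_le {a C : ℝ} (h : ∀ m, m * a ≤ C) : a = 0 :=
  le_antisymm (nonpos_of_forall_nonneg_mul_le fun s _ => h s) <|
    neg_nonpos.1 <| nonpos_of_forall_nonneg_mul_le fun s _ => by simpa using h (-s)

section AffineMinorant

variable {E : Type*} [AddCommGroup E] [Module ℝ E] {ρ : E → ℝ} {φ : E →ₗ[ℝ] ℝ} {r : ℝ}

theorem LinearMap.map_nonpos_of_add_le_of_antitone [PartialOrder E] [PosSMulMono ℝ E]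
    (hρ : Antitone ρ) (h : ∀ x, φ x + r ≤ ρ x) {x : E} (hx : 0 ≤ x) : φ x ≤ 0 :=
  nonpos_of_forall_nonneg_mul_le (C := ρ 0 - r) fun s hs => by
    have h_mono := hρ (smul_nonneg hs hx)
    have := h (s • x)
    rw [map_smul, smul_eq_mul] at this
    linarith

theorem LinearMap.map_eq_neg_one_of_add_le_of_cash_invariant {e : E}
    (hρ : ∀ m : ℝ, ρ (m • e) = ρ 0 - m) (h : ∀ x, φ x + r ≤ ρ x) : φ e = -1 := by
  have h_zero : φ e + 1 = 0 := eq_zero_of_forall_mul_le (C := ρ 0 - r) fun m => by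
    have := h (m • e)
    rw [map_smul, smul_eq_mul, hρ] at this
    linarith
  linarith

end AffineMinorant

theorem exists_affine_between_of_concaveOn_le_convexOn {E : Type*} [AddCommGroup E]
    [Module ℝ E] [TopologicalSpace E] [IsTopologicalAddGroup E] [ContinuousSMul ℝ E]
    {f g : E → ℝ} (hf : ConvexOn ℝ Set.univ f) (hf_cont : Continuous f)
    (hg : ConcaveOn ℝ Set.univ g) (hgf : ∀ x, g x ≤ f x) :
    ∃ (φ : StrongDual ℝ E) (r : ℝ), ∀ x, g x ≤ φ x + r ∧ φ x + r ≤ f x := by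
  have h_open : IsOpen {p : E × ℝ | p.1 ∈ Set.univ ∧ f p.1 < p.2} := by
    simpa using isOpen_lt (hf_cont.comp continuous_fst) continuous_snd
  have h_disj : Disjoint {p : E × ℝ | p.1 ∈ Set.univ ∧ f p.1 < p.2}
      {p : E × ℝ | p.1 ∈ Set.univ ∧ p.2 ≤ g p.1} :=
    Set.disjoint_left.2 fun p hpf hpg => (hpg.2.trans (hgf p.1)).not_gt hpf.2
  obtain ⟨L, u, hLf, hLg⟩ :=
    geometric_hahn_banach_open hf.convex_strict_epigraph h_open hg.convex_hypograph h_disj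
  set ℓ : StrongDual ℝ E := L.comp (.inl ℝ E ℝ)
  set α : ℝ := L (0, 1)
  have hL : ∀ x t, L (x, t) = ℓ x + t * α := fun x t => by
    rw [show ((x, t) : E × ℝ) = (x, 0) + t • (0, 1) by simp, map_add, map_smul]
    simp [ℓ, α]
  have hα : α < 0 := by
    have h₁ := hLf (0, f 0 + 1) (by simp)
    have h₂ := hLg (0, g 0) (by simp)
    rw [hL] at h₁ h₂
    nlinarith [hgf 0]
  refine ⟨-α⁻¹ • ℓ, u / α, fun x => ?_⟩
  rw [show (-α⁻¹ • ℓ) x + u / α = (u - ℓ x) / α by simp; field_simp; ring]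
  constructor
  · rw [le_div_iff_of_neg hα]
    linarith [hL x (g x) ▸ hLg (x, g x) (by simp)]
  · refine le_of_forall_gt fun t ht => ?_
    rw [div_lt_iff_of_neg hα]
    linarith [hL x t ▸ hLf (x, t) (by simpa using ht)]

instance BoundedContinuousFunction.instPosSMulMonoReal {Ω : Type*} [TopologicalSpace Ω] : PosSMulMono ℝ (Ω →ᵇ ℝ) :=
  ⟨fun _ ha _ _ h ω => mul_le_mul_of_nonneg_left (h ω) ha⟩

namespace IsConvexRiskMeasure

variable {Ω : Type*} [TopologicalSpace Ω] {ρ : (Ω →ᵇ ℝ) → ℝ}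

theorem antitone (hρ : IsConvexRiskMeasure ρ) : Antitone ρ :=
  fun Φ Ψ h => hρ.2.1 Φ Ψ h

theorem apply_add_const (hρ : IsConvexRiskMeasure ρ) (Φ : Ω →ᵇ ℝ) (m : ℝ) :
    ρ (Φ + const Ω m) = ρ Φ - m :=
  hρ.2.2 Φ m

theorem apply_smul_const_one (hρ : IsConvexRiskMeasure ρ) (m : ℝ) :
    ρ (m • const Ω 1) = ρ 0 - m := by
  rw [← hρ.apply_add_const 0 m, zero_add]
  congr 1
  ext
  simp

theorem convexOn (hρ : IsConvexRiskMeasure ρ) : ConvexOn ℝ Set.univ ρ := by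
  refine ⟨convex_univ, fun Φ _ Ψ _ a b ha hb hab => ?_⟩
  obtain rfl : b = 1 - a := by linarith
  exact hρ.1 Φ Ψ a ha (by linarith)

theorem lipschitzWith (hρ : IsConvexRiskMeasure ρ) : LipschitzWith 1 ρ := by
  refine LipschitzWith.of_le_add fun Φ Ψ => ?_
  have h := hρ.antitone (b := Φ) (a := Ψ + const Ω (-dist Ψ Φ)) fun ω => by
    simpa [← sub_eq_add_neg, sub_le_iff_le_add] using coe_le_coe_add_dist (x := ω)
  rw [hρ.apply_add_const] at h
  rw [dist_comm]
  linarith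

end IsConvexRiskMeasure

theorem stmt13_general {Ω : Type*} [TopologicalSpace Ω]
    (ρA ρB : (Ω →ᵇ ℝ) → ℝ)
    (hA : IsConvexRiskMeasure ρA) (hB : IsConvexRiskMeasure ρB)
    (c : ℝ) (hc : ∀ H : Ω →ᵇ ℝ, c ≤ ρA H + ρB (-H)) :
    ∃ (q : (Ω →ᵇ ℝ) →L[ℝ] ℝ) (r : ℝ),
      (∀ Ψ : Ω →ᵇ ℝ, (∀ ω, 0 ≤ Ψ ω) → 0 ≤ q Ψ) ∧
      q (BoundedContinuousFunction.const Ω (1 : ℝ)) = 1 ∧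
      ∀ Ψ : Ω →ᵇ ℝ, q (-Ψ) + r ≤ ρA Ψ ∧ -ρB (-Ψ) + c ≤ q (-Ψ) + r := by
  have h_convex : ConvexOn ℝ Set.univ fun Ψ => ρB (-Ψ) := by
    simpa [Function.comp_def] using hB.convexOn.comp_linearMap (-LinearMap.id)
  have h_concave : ConcaveOn ℝ Set.univ fun Ψ => c - ρB (-Ψ) :=
    (concaveOn_const c convex_univ).sub h_convex
  obtain ⟨φ, r, hφ⟩ := exists_affine_between_of_concaveOn_le_convexOn hA.convexOn
    hA.lipschitzWith.continuous h_concave fun Ψ => by linarith [hc Ψ]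
  have h_minorant : ∀ Ψ, (φ : (Ω →ᵇ ℝ) →ₗ[ℝ] ℝ) Ψ + r ≤ ρA Ψ := fun Ψ => (hφ Ψ).2
  refine ⟨-φ, r, fun Ψ hΨ => ?_, ?_, fun Ψ => ?_⟩
  · simpa using LinearMap.map_nonpos_of_add_le_of_antitone hA.antitone h_minorant hΨ
  · rw [_root_.neg_apply, neg_eq_iff_eq_neg]
    exact LinearMap.map_eq_neg_one_of_add_le_of_cash_invariant hA.apply_smul_const_one h_minorant
  · rw [_root_.neg_apply, map_neg, neg_neg]
    constructor <;> linarith [hφ Ψ]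

/-- Sandwich theorem: if `ρ_A(H) + ρ_B(-H) ≥ c` for all `H`, then there is a positive
normalized continuous linear functional `q` and `r ∈ ℝ` such that the affine function
`Ψ ↦ q(-Ψ) + r` separates `ρ_A` and `-ρ_B(-·) + c`. -/
theorem stmt13 {Ω : Type*} [TopologicalSpace Ω] [DiscreteTopology Ω] [Nonempty Ω]
    (ρA ρB : (Ω →ᵇ ℝ) → ℝ)
    (hA : IsConvexRiskMeasure ρA) (hB : IsConvexRiskMeasure ρB)
    (c : ℝ) (hc : ∀ H : Ω →ᵇ ℝ, c ≤ ρA H + ρB (-H)) :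
    ∃ (q : (Ω →ᵇ ℝ) →L[ℝ] ℝ) (r : ℝ),
      (∀ Ψ : Ω →ᵇ ℝ, (∀ ω, 0 ≤ Ψ ω) → 0 ≤ q Ψ) ∧
      q (BoundedContinuousFunction.const Ω (1 : ℝ)) = 1 ∧
      ∀ Ψ : Ω →ᵇ ℝ, q (-Ψ) + r ≤ ρA Ψ ∧ -ρB (-Ψ) + c ≤ q (-Ψ) + r :=
  stmt13_general ρA ρB hA hB c hc
end

section
/- (Borch's theorem.) Let ρ be a convex risk measure on X, let γ_A, γ_B > 0 and γ_C = γ_A + γ_B, and let ρ_{γ_A}, ρ_{γ_B}, ρ_{γ_C} be the corresponding γ-tolerant risk measures. For any initial exposures X_A, X_B ∈ X, the optimal risk transfer problem satisfies inf_{F∈X} { ρ_{γ_A}(X_A − F) + ρ_{γ_B}(X_B + F) } = ρ_{γ_C}(X_A + X_B), and the infimum is attained at the proportional structure F* = (γ_B/γ_C)·X_A − (γ_A/γ_C)·X_B. -/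
/-!
`ρ_γ` is the perspective of `ρ`, so for convex `ρ` the map `(γ, Ψ) ↦ ρ_γ(Ψ)` is jointly
subadditive: `ρ_{γ_A + γ_B}(Φ + Ψ) ≤ ρ_{γ_A}(Φ) + ρ_{γ_B}(Ψ)`, which applied to
`Φ = X_A - F`, `Ψ = X_B + F` bounds every transfer from below. It is also positively
homogeneous in `(γ, Ψ)`, so splitting `X_A + X_B` in proportion `γ_A : γ_B` between the two
agents attains the bound.
-/

open BoundedContinuousFunction

noncomputable def dilated {Ω : Type*} [TopologicalSpace Ω]
    (ρ : (Ω →ᵇ ℝ) → ℝ) (γ : ℝ) (Ψ : Ω →ᵇ ℝ) : ℝ :=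
  γ * ρ (γ⁻¹ • Ψ)

theorem sub_transfer_eq_smul_add {R E : Type*} [CommRing R] [AddCommGroup E] [Module R E]
    {a b : R} (hab : a + b = 1) (x y : E) : x - (b • x - a • y) = a • (x + y) := by
  linear_combination (norm := module) hab • (-x)

theorem add_transfer_eq_smul_add {R E : Type*} [CommRing R] [AddCommGroup E] [Module R E]
    {a b : R} (hab : a + b = 1) (x y : E) : y + (b • x - a • y) = b • (x + y) := by
  linear_combination (norm := module) hab • (-y)

section Dilated

variable {Ω : Type*} [TopologicalSpace Ω] {ρ : (Ω →ᵇ ℝ) → ℝ}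

theorem IsConvexRiskMeasure.convexOn_s16 (hρ : IsConvexRiskMeasure ρ) : ConvexOn ℝ Set.univ ρ := by
  refine ⟨convex_univ, fun Φ _ Ψ _ a b ha hb hab => ?_⟩
  obtain rfl : b = 1 - a := by linarith
  simpa only [smul_eq_mul] using hρ.1 Φ Ψ a ha (by linarith)

theorem dilated_add_le (hconv : ConvexOn ℝ Set.univ ρ) {γA γB : ℝ} (hγA : 0 < γA) (hγB : 0 < γB)
    (Φ Ψ : Ω →ᵇ ℝ) : dilated ρ (γA + γB) (Φ + Ψ) ≤ dilated ρ γA Φ + dilated ρ γB Ψ := by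
  have hγC : 0 < γA + γB := add_pos hγA hγB
  have hweights : γA / (γA + γB) + γB / (γA + γB) = 1 := by
    rw [← add_div, div_self hγC.ne']
  have hmix : (γA / (γA + γB)) • (γA⁻¹ • Φ) + (γB / (γA + γB)) • (γB⁻¹ • Ψ)
      = (γA + γB)⁻¹ • (Φ + Ψ) := by
    have hA : γA / (γA + γB) * γA⁻¹ = (γA + γB)⁻¹ := by field_simp
    have hB : γB / (γA + γB) * γB⁻¹ = (γA + γB)⁻¹ := by field_simp
    rw [smul_smul, smul_smul, hA, hB, smul_add]
  have hjensen := hconv.2 (Set.mem_univ (γA⁻¹ • Φ)) (Set.mem_univ (γB⁻¹ • Ψ))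
    (div_pos hγA hγC).le (div_pos hγB hγC).le hweights
  rw [hmix, smul_eq_mul, smul_eq_mul] at hjensen
  calc dilated ρ (γA + γB) (Φ + Ψ)
      ≤ (γA + γB) * (γA / (γA + γB) * ρ (γA⁻¹ • Φ) + γB / (γA + γB) * ρ (γB⁻¹ • Ψ)) :=
        mul_le_mul_of_nonneg_left hjensen hγC.le
    _ = dilated ρ γA Φ + dilated ρ γB Ψ := by
        simp only [dilated]
        field_simp

theorem dilated_smul_div {γ δ : ℝ} (hγ : γ ≠ 0) (hδ : δ ≠ 0) (Ψ : Ω →ᵇ ℝ) :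
    dilated ρ γ ((γ / δ) • Ψ) = γ / δ * dilated ρ δ Ψ := by
  have hscale : γ⁻¹ * (γ / δ) = δ⁻¹ := by field_simp
  rw [dilated, dilated, smul_smul, hscale]
  field_simp

end Dilated

theorem stmt16_general {Ω : Type*} [TopologicalSpace Ω]
    (ρ : (Ω →ᵇ ℝ) → ℝ) (hρ : IsConvexRiskMeasure ρ)
    (γA γB : ℝ) (hγA : 0 < γA) (hγB : 0 < γB) (XA XB : Ω →ᵇ ℝ) :
    (⨅ F : Ω →ᵇ ℝ, (dilated ρ γA (XA - F) + dilated ρ γB (XB + F)))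
        = dilated ρ (γA + γB) (XA + XB) ∧
    dilated ρ γA (XA - ((γB / (γA + γB)) • XA - (γA / (γA + γB)) • XB))
      + dilated ρ γB (XB + ((γB / (γA + γB)) • XA - (γA / (γA + γB)) • XB))
        = dilated ρ (γA + γB) (XA + XB) := by
  have hγC : γA + γB ≠ 0 := (add_pos hγA hγB).ne'
  have hweights : γA / (γA + γB) + γB / (γA + γB) = 1 := by
    rw [← add_div, div_self hγC]
  have hshareA : XA - ((γB / (γA + γB)) • XA - (γA / (γA + γB)) • XB)
      = (γA / (γA + γB)) • (XA + XB) := sub_transfer_eq_smul_add hweights XA XB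
  have hshareB : XB + ((γB / (γA + γB)) • XA - (γA / (γA + γB)) • XB)
      = (γB / (γA + γB)) • (XA + XB) := add_transfer_eq_smul_add hweights XA XB
  have hopt : dilated ρ γA (XA - ((γB / (γA + γB)) • XA - (γA / (γA + γB)) • XB))
      + dilated ρ γB (XB + ((γB / (γA + γB)) • XA - (γA / (γA + γB)) • XB))
        = dilated ρ (γA + γB) (XA + XB) := by
    rw [hshareA, hshareB, dilated_smul_div hγA.ne' hγC, dilated_smul_div hγB.ne' hγC,
      ← add_mul, hweights, one_mul]
  have hlower (F : Ω →ᵇ ℝ) :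
      dilated ρ (γA + γB) (XA + XB) ≤ dilated ρ γA (XA - F) + dilated ρ γB (XB + F) := by
    simpa only [sub_add_add_cancel] using
      dilated_add_le hρ.convexOn_s16 hγA hγB (XA - F) (XB + F)
  refine ⟨IsGLB.ciInf_eq (IsLeast.isGLB ⟨⟨_, hopt⟩, ?_⟩), hopt⟩
  rintro _ ⟨F, rfl⟩
  exact hlower F

/-- Borch's theorem: the optimal risk transfer between two agents with `γ`-tolerant
risk measures `ρ_{γ_A}` and `ρ_{γ_B}` satisfies
`inf_F { ρ_{γ_A}(X_A - F) + ρ_{γ_B}(X_B + F) } = ρ_{γ_A+γ_B}(X_A + X_B)`, the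
infimum being attained at the proportional structure
`F* = (γ_B/γ_C) X_A - (γ_A/γ_C) X_B`. -/
theorem stmt16 {Ω : Type*} [TopologicalSpace Ω] [DiscreteTopology Ω] [Nonempty Ω]
    (ρ : (Ω →ᵇ ℝ) → ℝ) (hρ : IsConvexRiskMeasure ρ)
    (γA γB : ℝ) (hγA : 0 < γA) (hγB : 0 < γB) (XA XB : Ω →ᵇ ℝ) :
    (⨅ F : Ω →ᵇ ℝ, (dilated ρ γA (XA - F) + dilated ρ γB (XB + F)))
        = dilated ρ (γA + γB) (XA + XB) ∧
    dilated ρ γA (XA - ((γB / (γA + γB)) • XA - (γA / (γA + γB)) • XB))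
      + dilated ρ γB (XB + ((γB / (γA + γB)) • XA - (γA / (γA + γB)) • XB))
        = dilated ρ (γA + γB) (XA + XB) :=
  stmt16_general ρ hρ γA γB hγA hγB XA XB
end
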